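/- arXiv:2101.09484 — 14 statements merged into one kernel-verified Lean document; each statement's English description precedes it below -/
import Mathlib

section
/- Let R be a (not necessarily unital, associative) ring, let (λ, ρ) be a double homothetism on R, and let s ∈ R be such that λ(s) = ρ(s), λ(λ(a)) = λ(a) + s·a and ρ(ρ(a)) = ρ(a) + a·s for all a ∈ R. Then the abelian group R × ℤ equipped with the product (a,k)·(b,l) = (a·b + l•ρ(a) + k•λ(b) + (k·l)•s, k·l) is an associative ring (the multiplication is associative and distributes over componentwise addition). -/
/-- The homothetic extension product on `R × ℤ`. -/
def homotheticMul {R : Type*} [NonUnitalRing R] (lam rho : R →+ R) (s : R)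
    (p q : R × ℤ) : R × ℤ :=
  (p.1 * q.1 + q.2 • rho p.1 + p.2 • lam q.1 + (p.2 * q.2) • s, p.2 * q.2)

/-!
Expand both bracketings of the first coordinate of a triple product `(a,k)(b,l)(c,m)` and
sort the terms by their integer coefficient. The coefficients of `1`, `k` and `m` agree once
`λ` and `ρ` are pulled through products, and the remaining ones are matched by exactly
one axiom each: `l` by `aλ(c) = ρ(a)c`, `lm` by `ρ∘ρ = ρ + (-·s)`, `km` by `ρλ = λρ`,
`kl` by `λ∘λ = λ + (s·-)` and `klm` by `λ(s) = ρ(s)`.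
-/

section

variable {R : Type*} [NonUnitalRing R] (lam rho : R →+ R) (s : R)

theorem homotheticMul_add_right (x y z : R × ℤ) :
    homotheticMul lam rho s x (y + z)
      = homotheticMul lam rho s x y + homotheticMul lam rho s x z := by
  ext
  · simp only [homotheticMul, Prod.fst_add, Prod.snd_add, map_add, mul_add]
    module
  · exact mul_add _ _ _

theorem homotheticMul_add_left (x y z : R × ℤ) :
    homotheticMul lam rho s (x + y) z
      = homotheticMul lam rho s x z + homotheticMul lam rho s y z := by
  ext
  · simp only [homotheticMul, Prod.fst_add, Prod.snd_add, map_add, add_mul]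
    module
  · exact add_mul _ _ _

variable {lam rho}

theorem fst_homotheticMul_homotheticMul_left (hrho : ∀ a b : R, rho (a * b) = a * rho b)
    (a b c : R) (k l m : ℤ) :
    (homotheticMul lam rho s (homotheticMul lam rho s (a, k) (b, l)) (c, m)).1
      = a * b * c + l • (rho a * c) + k • (lam b * c) + (k * l) • (s * c) + m • (a * rho b)
        + (l * m) • rho (rho a) + (k * m) • rho (lam b) + (k * l) • lam c
        + (k * l * m) • rho s + (k * l * m) • s := by
  simp only [homotheticMul, add_mul, smul_mul_assoc, map_add, map_zsmul, hrho]
  module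

theorem fst_homotheticMul_homotheticMul_right (hlam : ∀ a b : R, lam (a * b) = lam a * b)
    (a b c : R) (k l m : ℤ) :
    (homotheticMul lam rho s (a, k) (homotheticMul lam rho s (b, l) (c, m))).1
      = a * b * c + l • (a * lam c) + k • (lam b * c) + (l * m) • (a * s) + m • (a * rho b)
        + (l * m) • rho a + (k * m) • lam (rho b) + (k * l) • lam (lam c)
        + (k * l * m) • lam s + (k * l * m) • s := by
  simp only [homotheticMul, mul_add, mul_smul_comm, map_add, map_zsmul, hlam, mul_assoc]
  module

theorem homotheticMul_assoc (hlam : ∀ a b : R, lam (a * b) = lam a * b)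
    (hrho : ∀ a b : R, rho (a * b) = a * rho b)
    (hmid : ∀ a b : R, a * lam b = rho a * b)
    (hperm : ∀ a : R, rho (lam a) = lam (rho a))
    (hs : lam s = rho s)
    (hll : ∀ a : R, lam (lam a) = lam a + s * a)
    (hrr : ∀ a : R, rho (rho a) = rho a + a * s) (x y z : R × ℤ) :
    homotheticMul lam rho s (homotheticMul lam rho s x y) z
      = homotheticMul lam rho s x (homotheticMul lam rho s y z) := by
  obtain ⟨a, k⟩ := x
  obtain ⟨b, l⟩ := y
  obtain ⟨c, m⟩ := z
  ext
  · rw [fst_homotheticMul_homotheticMul_left s hrho, fst_homotheticMul_homotheticMul_right s hlam,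
      hmid, hrr, hperm, hll, hs]
    module
  · exact mul_assoc k l m

end

/-- Given a homothetic datum `((λ,ρ), s)` on a non-unital ring `R`, the abelian group
`R × ℤ` with product `(a,k)(b,l) = (ab + l•ρ(a) + k•λ(b) + (kl)•s, kl)` is an
associative ring: multiplication is associative and distributes over addition. -/
theorem homothetic_extension_is_ring {R : Type*} [NonUnitalRing R]
    (lam rho : R →+ R) (s : R)
    (hlam : ∀ a b : R, lam (a * b) = lam a * b)
    (hrho : ∀ a b : R, rho (a * b) = a * rho b)
    (hmid : ∀ a b : R, a * lam b = rho a * b)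
    (hperm : ∀ a : R, rho (lam a) = lam (rho a))
    (hs : lam s = rho s)
    (hll : ∀ a : R, lam (lam a) = lam a + s * a)
    (hrr : ∀ a : R, rho (rho a) = rho a + a * s) :
    (∀ x y z : R × ℤ,
      homotheticMul lam rho s (homotheticMul lam rho s x y) z
        = homotheticMul lam rho s x (homotheticMul lam rho s y z)) ∧
    (∀ x y z : R × ℤ,
      homotheticMul lam rho s x (y + z)
        = homotheticMul lam rho s x y + homotheticMul lam rho s x z) ∧
    (∀ x y z : R × ℤ,
      homotheticMul lam rho s (x + y) z
        = homotheticMul lam rho s x z + homotheticMul lam rho s y z) :=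
  ⟨homotheticMul_assoc s hlam hrho hmid hperm hs hll hrr,
    homotheticMul_add_right lam rho s, homotheticMul_add_left lam rho s⟩
end

section
/- Let R and S be (not necessarily unital, associative) rings, φ_R : R → S an injective ring homomorphism and φ_Z : S → ℤ a surjective ring homomorphism with ker φ_Z = range φ_R, and let q ∈ S satisfy φ_Z(q) = 1. Then there exist additive endomorphisms λ, ρ of R and an element s ∈ R such that φ_R(λ(a)) = q·φ_R(a), φ_R(ρ(a)) = φ_R(a)·q for all a ∈ R, and φ_R(s) = q² − q; the triple (λ, ρ, s) is a homothetic datum on R; and the map R × ℤ → S, (a, n) ↦ φ_R(a) + n•q, is a ring isomorphism from the homothetic extension R(σ,s) to S. -/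
/-!
Since `ker φZ = φR(R)` is an ideal of `S`, left and right multiplication by `q` and the element
`q² - q` (killed by `φZ` because `φZ q = 1`) pull back along `φR` to `λ`, `ρ` and `s`. Every
identity of a homothetic datum is then an associativity identity in `S` transported back by the
injectivity of `φR`, and `S = φR(R) ⊕ ℤq` because `φZ q = 1` splits `φZ`.
-/

open Function

namespace AddMonoidHom

variable {M N P : Type*} [AddGroup M] [AddGroup N] [AddGroup P]

noncomputable def liftOfInjective (φ : M →+ N) (hφ : Injective φ) (f : P →+ N)
    (hf : ∀ x, f x ∈ Set.range φ) : P →+ M :=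
  (ofInjective hφ).symm.toAddMonoidHom.comp (f.codRestrict φ.range hf)

@[simp]
theorem apply_liftOfInjective (φ : M →+ N) (hφ : Injective φ) (f : P →+ N)
    (hf : ∀ x, f x ∈ Set.range φ) (x : P) : φ (liftOfInjective φ hφ f hf x) = f x :=
  apply_ofInjective_symm hφ _

end AddMonoidHom

structure IsHomotheticDatum {R : Type*} [NonUnitalRing R] (lam rho : R →+ R) (s : R) :
    Prop where
  lam_mul : ∀ a b, lam (a * b) = lam a * b
  rho_mul : ∀ a b, rho (a * b) = a * rho b
  mul_lam : ∀ a b, a * lam b = rho a * b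
  rho_lam : ∀ a, rho (lam a) = lam (rho a)
  lam_s_eq_rho_s : lam s = rho s
  lam_lam : ∀ a, lam (lam a) = lam a + s * a
  rho_rho : ∀ a, rho (rho a) = rho a + a * s

section Extension

variable {R S : Type*} [NonUnitalRing R] [NonUnitalRing S]

theorem exists_addMonoidHom_map_eq_mul_left {φ : R →ₙ+* S} (hφ : Injective φ) (q : S)
    (h : ∀ a, q * φ a ∈ Set.range φ) : ∃ lam : R →+ R, ∀ a, φ (lam a) = q * φ a :=
  ⟨_, φ.toAddMonoidHom.apply_liftOfInjective hφ
    ((AddMonoidHom.mulLeft q).comp φ.toAddMonoidHom) h⟩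

theorem exists_addMonoidHom_map_eq_mul_right {φ : R →ₙ+* S} (hφ : Injective φ) (q : S)
    (h : ∀ a, φ a * q ∈ Set.range φ) : ∃ rho : R →+ R, ∀ a, φ (rho a) = φ a * q :=
  ⟨_, φ.toAddMonoidHom.apply_liftOfInjective hφ
    ((AddMonoidHom.mulRight q).comp φ.toAddMonoidHom) h⟩

theorem isHomotheticDatum_of_injective {φ : R →ₙ+* S} (hφ : Injective φ) {q : S}
    {lam rho : R →+ R} {s : R} (hlam : ∀ a, φ (lam a) = q * φ a)
    (hrho : ∀ a, φ (rho a) = φ a * q) (hs : φ s = q * q - q) :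
    IsHomotheticDatum lam rho s where
  lam_mul a b := hφ <| by simp only [map_mul, hlam, mul_assoc]
  rho_mul a b := hφ <| by simp only [map_mul, hrho, mul_assoc]
  mul_lam a b := hφ <| by simp only [map_mul, hlam, hrho, mul_assoc]
  rho_lam a := hφ <| by simp only [hlam, hrho, mul_assoc]
  lam_s_eq_rho_s := hφ <| by simp only [hlam, hrho, hs]; noncomm_ring
  lam_lam a := hφ <| by simp only [map_add, map_mul, hlam, hs]; noncomm_ring
  rho_rho a := hφ <| by simp only [map_add, map_mul, hrho, hs]; noncomm_ring

theorem map_homotheticMul {φ : R →ₙ+* S} {q : S} {lam rho : R →+ R} {s : R}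
    (hlam : ∀ a, φ (lam a) = q * φ a) (hrho : ∀ a, φ (rho a) = φ a * q)
    (hs : φ s = q * q - q) (x y : R × ℤ) :
    φ (homotheticMul lam rho s x y).1 + (homotheticMul lam rho s x y).2 • q
      = (φ x.1 + x.2 • q) * (φ y.1 + y.2 • q) := by
  obtain ⟨a, m⟩ := x
  obtain ⟨b, n⟩ := y
  simp only [homotheticMul, map_add, map_zsmul, map_mul, hlam, hrho, hs, smul_sub,
    smul_mul_assoc, mul_smul_comm, mul_smul, mul_add, add_mul, smul_add]
  rw [smul_comm n m]
  abel

end Extension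

theorem bijective_add_zsmul {R S : Type*} [AddGroup R] [AddCommGroup S] {φR : R →+ S}
    {φZ : S →+ ℤ} (hinj : Injective φR) (hker : ∀ x, φZ x = 0 ↔ x ∈ Set.range φR) {q : S}
    (hq : φZ q = 1) : Bijective fun p : R × ℤ => φR p.1 + p.2 • q := by
  have hφZR : ∀ a, φZ (φR a) = 0 := fun a => (hker _).2 ⟨a, rfl⟩
  refine ⟨?_, fun x => ?_⟩
  · rintro ⟨a, m⟩ ⟨b, n⟩ h
    obtain rfl : m = n := by simpa [hφZR, hq] using congrArg φZ h
    exact Prod.ext (hinj (add_right_cancel h)) rfl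
  · obtain ⟨a, ha⟩ := (hker (x - φZ x • q)).1 (by simp [hq])
    exact ⟨(a, φZ x), by simp [ha]⟩

theorem ideal_extension_by_int_is_homothetic_general {R S : Type*}
    [NonUnitalRing R] [NonUnitalRing S]
    (φR : R →ₙ+* S) (φZ : S →ₙ+* ℤ)
    (hinj : Function.Injective φR)
    (hker : ∀ x : S, φZ x = 0 ↔ x ∈ Set.range φR)
    (q : S) (hq : φZ q = 1) :
    ∃ (lam rho : R →+ R) (s : R),
      (∀ a : R, φR (lam a) = q * φR a) ∧
      (∀ a : R, φR (rho a) = φR a * q) ∧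
      (φR s = q * q - q) ∧
      (∀ a b : R, lam (a * b) = lam a * b) ∧
      (∀ a b : R, rho (a * b) = a * rho b) ∧
      (∀ a b : R, a * lam b = rho a * b) ∧
      (∀ a : R, rho (lam a) = lam (rho a)) ∧
      (lam s = rho s) ∧
      (∀ a : R, lam (lam a) = lam a + s * a) ∧
      (∀ a : R, rho (rho a) = rho a + a * s) ∧
      (Function.Bijective (fun p : R × ℤ => φR p.1 + p.2 • q)) ∧
      (∀ x y : R × ℤ,
        φR (x + y).1 + (x + y).2 • q = (φR x.1 + x.2 • q) + (φR y.1 + y.2 • q)) ∧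
      (∀ x y : R × ℤ,
        φR (homotheticMul lam rho s x y).1 + (homotheticMul lam rho s x y).2 • q
          = (φR x.1 + x.2 • q) * (φR y.1 + y.2 • q)) := by
  have hφZR : ∀ a, φZ (φR a) = 0 := fun a => (hker _).2 ⟨a, rfl⟩
  obtain ⟨lam, hlam⟩ := exists_addMonoidHom_map_eq_mul_left hinj q
    fun a => (hker _).1 (by simp [hφZR])
  obtain ⟨rho, hrho⟩ := exists_addMonoidHom_map_eq_mul_right hinj q
    fun a => (hker _).1 (by simp [hφZR])
  obtain ⟨s, hs⟩ := (hker (q * q - q)).1 (by simp [hq])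
  have hD := isHomotheticDatum_of_injective hinj hlam hrho hs
  refine ⟨lam, rho, s, hlam, hrho, hs, hD.lam_mul, hD.rho_mul, hD.mul_lam, hD.rho_lam,
    hD.lam_s_eq_rho_s, hD.lam_lam, hD.rho_rho,
    bijective_add_zsmul (φR := φR.toAddMonoidHom) (φZ := φZ.toAddMonoidHom) hinj hker hq,
    fun x y => ?_, map_homotheticMul hlam hrho hs⟩
  simp only [Prod.fst_add, Prod.snd_add, map_add, add_smul]
  abel

/-- Every ideal ring extension of `R` by `ℤ` is equivalent to a homothetic extension:
given an injective ring homomorphism `φ_R : R → S`, a surjective ring homomorphism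
`φ_Z : S → ℤ` with `ker φ_Z = range φ_R`, and `q ∈ S` with `φ_Z q = 1`, there is a
homothetic datum `(λ, ρ, s)` on `R` such that `φ_R (λ a) = q·φ_R a`,
`φ_R (ρ a) = φ_R a · q`, `φ_R s = q² − q`, and `(a, n) ↦ φ_R a + n•q` is a ring
isomorphism from `R(σ,s)` onto `S`. -/
theorem ideal_extension_by_int_is_homothetic {R S : Type*}
    [NonUnitalRing R] [NonUnitalRing S]
    (φR : R →ₙ+* S) (φZ : S →ₙ+* ℤ)
    (hinj : Function.Injective φR) (hsurj : Function.Surjective φZ)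
    (hker : ∀ x : S, φZ x = 0 ↔ x ∈ Set.range φR)
    (q : S) (hq : φZ q = 1) :
    ∃ (lam rho : R →+ R) (s : R),
      (∀ a : R, φR (lam a) = q * φR a) ∧
      (∀ a : R, φR (rho a) = φR a * q) ∧
      (φR s = q * q - q) ∧
      (∀ a b : R, lam (a * b) = lam a * b) ∧
      (∀ a b : R, rho (a * b) = a * rho b) ∧
      (∀ a b : R, a * lam b = rho a * b) ∧
      (∀ a : R, rho (lam a) = lam (rho a)) ∧
      (lam s = rho s) ∧
      (∀ a : R, lam (lam a) = lam a + s * a) ∧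
      (∀ a : R, rho (rho a) = rho a + a * s) ∧
      (Function.Bijective (fun p : R × ℤ => φR p.1 + p.2 • q)) ∧
      (∀ x y : R × ℤ,
        φR (x + y).1 + (x + y).2 • q = (φR x.1 + x.2 • q) + (φR y.1 + y.2 • q)) ∧
      (∀ x y : R × ℤ,
        φR (homotheticMul lam rho s x y).1 + (homotheticMul lam rho s x y).2 • q
          = (φR x.1 + x.2 • q) * (φR y.1 + y.2 • q)) :=
  ideal_extension_by_int_is_homothetic_general φR φZ hinj hker q hq
end

section
/- Let R be a ring with a homothetic datum (λ, ρ, s), and suppose the additive group of R has finite exponent N, i.e., N•a = 0 for all a ∈ R. Then the subset I_N = {(0, N·k) : k ∈ ℤ} of R × ℤ is a two-sided ideal of the homothetic extension ring R(σ,s): it is an additive subgroup and for all (a,k) ∈ R × ℤ and l ∈ ℤ, both (a,k)·(0,N·l) and (0,N·l)·(a,k) lie in I_N. -/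
theorem zsmul_eq_zero_of_natCast_dvd {A : Type*} [AddGroup A] {N : ℕ}
    (hN : ∀ a : A, N • a = 0) {m : ℤ} (hm : (N : ℤ) ∣ m) (a : A) : m • a = 0 := by
  obtain ⟨k, rfl⟩ := hm
  rw [mul_comm, mul_zsmul, natCast_zsmul, hN, zsmul_zero]

section

variable {R : Type*} [NonUnitalRing R] (lam rho : R →+ R) (s : R)

theorem homotheticMul_zero_fst_right (p : R × ℤ) (m : ℤ) :
    homotheticMul lam rho s p (0, m) = (m • rho p.1 + (p.2 * m) • s, p.2 * m) := by
  simp [homotheticMul]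

theorem homotheticMul_zero_fst_left (m : ℤ) (q : R × ℤ) :
    homotheticMul lam rho s (0, m) q = (m • lam q.1 + (m * q.2) • s, m * q.2) := by
  simp [homotheticMul]

end

theorem homothetic_extension_IN_ideal_general {R : Type*} [NonUnitalRing R]
    (lam rho : R →+ R) (s : R)
    (N : ℕ) (hN : ∀ a : R, N • a = 0) :
    (∃ k : ℤ, (0 : R × ℤ) = (0, (N : ℤ) * k)) ∧
    (∀ x y : R × ℤ, (∃ k : ℤ, x = (0, (N : ℤ) * k)) → (∃ k : ℤ, y = (0, (N : ℤ) * k)) →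
      ∃ k : ℤ, x + y = (0, (N : ℤ) * k)) ∧
    (∀ x : R × ℤ, (∃ k : ℤ, x = (0, (N : ℤ) * k)) → ∃ k : ℤ, -x = (0, (N : ℤ) * k)) ∧
    (∀ (p : R × ℤ) (l : ℤ),
      (∃ k : ℤ, homotheticMul lam rho s p (0, (N : ℤ) * l) = (0, (N : ℤ) * k)) ∧
      (∃ k : ℤ, homotheticMul lam rho s (0, (N : ℤ) * l) p = (0, (N : ℤ) * k))) := by
  have torsion {m : ℤ} (hm : (N : ℤ) ∣ m) (a : R) : m • a = 0 :=
    zsmul_eq_zero_of_natCast_dvd hN hm a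
  refine ⟨⟨0, by rw [mul_zero]; rfl⟩, ?_, ?_, fun p l => ⟨⟨p.2 * l, ?_⟩, ⟨l * p.2, ?_⟩⟩⟩
  · rintro _ _ ⟨k, rfl⟩ ⟨j, rfl⟩
    exact ⟨k + j, by simp [mul_add]⟩
  · rintro _ ⟨k, rfl⟩
    exact ⟨-k, by simp⟩
  · rw [homotheticMul_zero_fst_right, torsion (dvd_mul_right _ _),
      torsion (dvd_mul_of_dvd_right (dvd_mul_right _ _) _), add_zero, mul_left_comm]
  · rw [homotheticMul_zero_fst_left, torsion (dvd_mul_right _ _),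
      torsion (dvd_mul_of_dvd_left (dvd_mul_right _ _) _), add_zero, mul_assoc]

/-- If the additive group of `R` has finite exponent `N`, then
`I_N = {(0, N·k) : k ∈ ℤ}` is a two-sided ideal of the homothetic extension
ring `R(σ,s)` on `R × ℤ`. -/
theorem homothetic_extension_IN_ideal {R : Type*} [NonUnitalRing R]
    (lam rho : R →+ R) (s : R)
    (hlam : ∀ a b : R, lam (a * b) = lam a * b)
    (hrho : ∀ a b : R, rho (a * b) = a * rho b)
    (hmid : ∀ a b : R, a * lam b = rho a * b)
    (hperm : ∀ a : R, rho (lam a) = lam (rho a))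
    (hs : lam s = rho s)
    (hll : ∀ a : R, lam (lam a) = lam a + s * a)
    (hrr : ∀ a : R, rho (rho a) = rho a + a * s)
    (N : ℕ) (hN : ∀ a : R, N • a = 0) :
    (∃ k : ℤ, (0 : R × ℤ) = (0, (N : ℤ) * k)) ∧
    (∀ x y : R × ℤ, (∃ k : ℤ, x = (0, (N : ℤ) * k)) → (∃ k : ℤ, y = (0, (N : ℤ) * k)) →
      ∃ k : ℤ, x + y = (0, (N : ℤ) * k)) ∧
    (∀ x : R × ℤ, (∃ k : ℤ, x = (0, (N : ℤ) * k)) → ∃ k : ℤ, -x = (0, (N : ℤ) * k)) ∧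
    (∀ (p : R × ℤ) (l : ℤ),
      (∃ k : ℤ, homotheticMul lam rho s p (0, (N : ℤ) * l) = (0, (N : ℤ) * k)) ∧
      (∃ k : ℤ, homotheticMul lam rho s (0, (N : ℤ) * l) p = (0, (N : ℤ) * k))) :=
  homothetic_extension_IN_ideal_general lam rho s N hN
end

section
/- Let R be a ring with a homothetic datum (λ, ρ, s). Define the operation a ⋄ b = a·b + ρ(a) + λ(b) + s on R. Then ⋄ is associative and distributes over the heap bracket, i.e., a ⋄ (b − c + d) = a⋄b − a⋄c + a⋄d and (a − b + c) ⋄ d = a⋄d − b⋄d + c⋄d for all a, b, c, d ∈ R. -/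
/-!
Distributivity over the heap bracket holds for any additive `λ`, `ρ` and any `s`, since
`a ⋄ -` and `- ⋄ d` are affine and the heap bracket is an affine combination.
For associativity, both `(a ⋄ b) ⋄ c` and `a ⋄ (b ⋄ c)` expand to the same normal form
`abc + ρ(a)c + λ(b)c + sc + aρ(b) + λρ(b) + ρ(a) + as + λ(c) + ρ(s) + s`:
on the left one rewrites `ρ(ab)`, `ρρ(a)` and `ρλ(b)`, on the right `aλ(c)`, `λ(bc)`,
`λλ(c)` and `λ(s)`.
-/

section

variable {R : Type*} [NonUnitalRing R]

structure IsHomotheticDatum_s4 (lam rho : R →+ R) (s : R) : Prop where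
  lam_mul : ∀ a b : R, lam (a * b) = lam a * b
  rho_mul : ∀ a b : R, rho (a * b) = a * rho b
  mul_lam : ∀ a b : R, a * lam b = rho a * b
  rho_lam : ∀ a : R, rho (lam a) = lam (rho a)
  lam_s : lam s = rho s
  lam_lam : ∀ a : R, lam (lam a) = lam a + s * a
  rho_rho : ∀ a : R, rho (rho a) = rho a + a * s

def trussMul (lam rho : R →+ R) (s a b : R) : R := a * b + rho a + lam b + s

section Distrib

variable (lam rho : R →+ R) (s : R)

theorem trussMul_sub_add (a b c d : R) :
    trussMul lam rho s a (b - c + d) =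
      trussMul lam rho s a b - trussMul lam rho s a c + trussMul lam rho s a d := by
  simp only [trussMul, map_add, map_sub, mul_add, mul_sub]
  abel

theorem sub_add_trussMul (a b c d : R) :
    trussMul lam rho s (a - b + c) d =
      trussMul lam rho s a d - trussMul lam rho s b d + trussMul lam rho s c d := by
  simp only [trussMul, map_add, map_sub, add_mul, sub_mul]
  abel

end Distrib

namespace IsHomotheticDatum_s4

variable {lam rho : R →+ R} {s : R} (h : IsHomotheticDatum_s4 lam rho s)
include h

theorem trussMul_trussMul_left (a b c : R) :
    trussMul lam rho s (trussMul lam rho s a b) c =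
      a * b * c + rho a * c + lam b * c + s * c + a * rho b + lam (rho b)
        + rho a + a * s + lam c + rho s + s := by
  simp only [trussMul, map_add, h.rho_mul, h.rho_rho, h.rho_lam, add_mul]
  abel

theorem trussMul_trussMul_right (a b c : R) :
    trussMul lam rho s a (trussMul lam rho s b c) =
      a * b * c + rho a * c + lam b * c + s * c + a * rho b + lam (rho b)
        + rho a + a * s + lam c + rho s + s := by
  simp only [trussMul, map_add, h.lam_mul, h.lam_lam, h.lam_s, h.mul_lam, mul_add, mul_assoc]
  abel

theorem trussMul_assoc (a b c : R) :
    trussMul lam rho s (trussMul lam rho s a b) c =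
      trussMul lam rho s a (trussMul lam rho s b c) := by
  rw [h.trussMul_trussMul_left, h.trussMul_trussMul_right]

end IsHomotheticDatum_s4

end

/-- Given a homothetic datum `(λ, ρ, s)` on a ring `R`, the homothetic truss
multiplication `a ⋄ b = a·b + ρ(a) + λ(b) + s` is associative and distributes
over the heap bracket `[a,b,c] = a − b + c`. -/
theorem homothetic_truss_mul {R : Type*} [NonUnitalRing R]
    (lam rho : R →+ R) (s : R)
    (hlam : ∀ a b : R, lam (a * b) = lam a * b)
    (hrho : ∀ a b : R, rho (a * b) = a * rho b)
    (hmid : ∀ a b : R, a * lam b = rho a * b)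
    (hperm : ∀ a : R, rho (lam a) = lam (rho a))
    (hs : lam s = rho s)
    (hll : ∀ a : R, lam (lam a) = lam a + s * a)
    (hrr : ∀ a : R, rho (rho a) = rho a + a * s) :
    (∀ a b c : R,
      ((a * b + rho a + lam b + s) * c + rho (a * b + rho a + lam b + s) + lam c + s)
        = (a * (b * c + rho b + lam c + s) + rho a + lam (b * c + rho b + lam c + s) + s)) ∧
    (∀ a b c d : R,
      a * (b - c + d) + rho a + lam (b - c + d) + s
        = (a * b + rho a + lam b + s) - (a * c + rho a + lam c + s)
            + (a * d + rho a + lam d + s)) ∧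
    (∀ a b c d : R,
      (a - b + c) * d + rho (a - b + c) + lam d + s
        = (a * d + rho a + lam d + s) - (b * d + rho b + lam d + s)
            + (c * d + rho c + lam d + s)) :=
  have h : IsHomotheticDatum_s4 lam rho s := ⟨hlam, hrho, hmid, hperm, hs, hll, hrr⟩
  ⟨h.trussMul_assoc, trussMul_sub_add lam rho s, sub_add_trussMul lam rho s⟩
end

section
/- Let (λ, ρ, s) be a homothetic datum on a ring R, let Φ be a ring automorphism of R and v ∈ R. Define s' = Φ(s + v + v² − ρ(v) − λ(v)), λ'(a) = Φ(λ(Φ⁻¹(a)) − v·Φ⁻¹(a)) and ρ'(a) = Φ(ρ(Φ⁻¹(a)) − Φ⁻¹(a)·v). Then (λ', ρ', s') is a homothetic datum on R, and the map Φ_v : a ↦ Φ(a + v) is a bijection of R satisfying Φ_v(a − b + c) = Φ_v(a) − Φ_v(b) + Φ_v(c) and Φ_v(a·b + ρ(a) + λ(b) + s) = Φ_v(a)·Φ_v(b) + ρ'(Φ_v(a)) + λ'(Φ_v(b)) + s' for all a, b, c ∈ R. -/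
/-!
`Φ_v` is the translation `a ↦ a + v` followed by the automorphism `Φ`, and each of the two
transports homothetic data: translation by `v` turns `(λ, ρ, s)` into
`(λ − v·, ρ − ·v, s + v + v² − ρ(v) − λ(v))`, and `Φ` acts by conjugation. The transported
datum `(λ', ρ', s')` is the result of both steps.
-/

/-- The transformed left operator `λ'(a) = Φ(λ(Φ⁻¹(a)) − v·Φ⁻¹(a))`. -/
def conjLam {R : Type*} [NonUnitalRing R] (Φ : R ≃+* R) (lam : R →+ R) (v : R) :
    R → R := fun a => Φ (lam (Φ.symm a) - v * Φ.symm a)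

/-- The transformed right operator `ρ'(a) = Φ(ρ(Φ⁻¹(a)) − Φ⁻¹(a)·v)`. -/
def conjRho {R : Type*} [NonUnitalRing R] (Φ : R ≃+* R) (rho : R →+ R) (v : R) :
    R → R := fun a => Φ (rho (Φ.symm a) - Φ.symm a * v)

/-- The transformed element `s' = Φ(s + v + v² − ρ(v) − λ(v))`. -/
def conjS {R : Type*} [NonUnitalRing R] (Φ : R ≃+* R) (lam rho : R →+ R)
    (s v : R) : R := Φ (s + v + v * v - rho v - lam v)

section

variable {R : Type*} [NonUnitalRing R]

structure IsHomotheticDatum_s6 (lam rho : R →+ R) (s : R) : Prop where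
  lam_mul : ∀ a b, lam (a * b) = lam a * b
  rho_mul : ∀ a b, rho (a * b) = a * rho b
  mul_lam : ∀ a b, a * lam b = rho a * b
  rho_lam : ∀ a, rho (lam a) = lam (rho a)
  lam_s : lam s = rho s
  lam_lam : ∀ a, lam (lam a) = lam a + s * a
  rho_rho : ∀ a, rho (rho a) = rho a + a * s

namespace Homothetic

def trussMul (lam rho : R → R) (s a b : R) : R := a * b + rho a + lam b + s

def translateLam (lam : R →+ R) (v : R) : R →+ R := lam - AddMonoidHom.mulLeft v

def translateRho (rho : R →+ R) (v : R) : R →+ R := rho - AddMonoidHom.mulRight v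

def translateS (lam rho : R →+ R) (s v : R) : R := s + v + v * v - rho v - lam v

def conjEnd (Φ : R ≃+* R) (f : R →+ R) : R →+ R :=
  (Φ : R →+ R).comp (f.comp (Φ.symm : R →+ R))

@[simp]
lemma translateLam_apply (lam : R →+ R) (v a : R) : translateLam lam v a = lam a - v * a := rfl

@[simp]
lemma translateRho_apply (rho : R →+ R) (v a : R) : translateRho rho v a = rho a - a * v := rfl

@[simp]
lemma conjEnd_apply (Φ : R ≃+* R) (f : R →+ R) (a : R) : conjEnd Φ f a = Φ (f (Φ.symm a)) :=
  rfl

theorem trussMul_add (lam rho : R →+ R) (s v a b : R) :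
    trussMul lam rho s a b + v =
      trussMul (translateLam lam v) (translateRho rho v) (translateS lam rho s v) (a + v) (b + v) := by
  simp only [trussMul, translateS, translateLam_apply, translateRho_apply, map_add]
  noncomm_ring

theorem map_trussMul (Φ : R ≃+* R) (lam rho : R →+ R) (s a b : R) :
    Φ (trussMul lam rho s a b) = trussMul (conjEnd Φ lam) (conjEnd Φ rho) (Φ s) (Φ a) (Φ b) := by
  simp [trussMul]

end Homothetic

namespace IsHomotheticDatum_s6

open Homothetic

variable {lam rho : R →+ R} {s : R}

theorem translate (h : IsHomotheticDatum_s6 lam rho s) (v : R) :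
    IsHomotheticDatum_s6 (translateLam lam v) (translateRho rho v) (translateS lam rho s v) where
  lam_mul a b := by simp only [translateLam_apply, h.lam_mul, sub_mul, mul_assoc]
  rho_mul a b := by simp only [translateRho_apply, h.rho_mul, mul_sub, mul_assoc]
  mul_lam a b := by
    simp only [translateLam_apply, translateRho_apply, mul_sub, sub_mul, h.mul_lam, mul_assoc]
  rho_lam a := by
    simp only [translateLam_apply, translateRho_apply, map_sub, h.lam_mul, h.rho_mul, h.rho_lam]
    noncomm_ring
  lam_s := by
    simp only [translateS, translateLam_apply, translateRho_apply, map_add, map_sub, h.lam_mul,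
      h.rho_mul, h.lam_lam, h.rho_rho, h.rho_lam, h.lam_s, h.mul_lam]
    noncomm_ring
  lam_lam a := by
    simp only [translateS, translateLam_apply, map_sub, h.lam_mul, h.lam_lam, sub_mul, add_mul,
      h.mul_lam]
    noncomm_ring
  rho_rho a := by
    simp only [translateS, translateRho_apply, map_sub, h.rho_mul, h.rho_rho, mul_sub, mul_add,
      ← h.mul_lam]
    noncomm_ring

theorem conj (h : IsHomotheticDatum_s6 lam rho s) (Φ : R ≃+* R) :
    IsHomotheticDatum_s6 (conjEnd Φ lam) (conjEnd Φ rho) (Φ s) where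
  lam_mul a b := by simp [h.lam_mul]
  rho_mul a b := by simp [h.rho_mul]
  mul_lam a b := Φ.symm.injective <| by simp [h.mul_lam]
  rho_lam a := by simp [h.rho_lam]
  lam_s := by simp [h.lam_s]
  lam_lam a := by simp [h.lam_lam]
  rho_rho a := by simp [h.rho_rho]

end IsHomotheticDatum_s6

end

/-- Transforming a homothetic datum `(λ, ρ, s)` on `R` by a ring automorphism `Φ`
and an element `v` yields a homothetic datum `(λ', ρ', s')`, and the map
`Φ_v : a ↦ Φ(a + v)` is a bijection preserving the heap bracket and intertwining
the homothetic truss multiplications. -/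
theorem homothetic_datum_transform {R : Type*} [NonUnitalRing R]
    (lam rho : R →+ R) (s : R)
    (hlam : ∀ a b : R, lam (a * b) = lam a * b)
    (hrho : ∀ a b : R, rho (a * b) = a * rho b)
    (hmid : ∀ a b : R, a * lam b = rho a * b)
    (hperm : ∀ a : R, rho (lam a) = lam (rho a))
    (hs : lam s = rho s)
    (hll : ∀ a : R, lam (lam a) = lam a + s * a)
    (hrr : ∀ a : R, rho (rho a) = rho a + a * s)
    (Φ : R ≃+* R) (v : R) :
    (∀ a b : R, conjLam Φ lam v (a + b) = conjLam Φ lam v a + conjLam Φ lam v b) ∧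
    (∀ a b : R, conjRho Φ rho v (a + b) = conjRho Φ rho v a + conjRho Φ rho v b) ∧
    (∀ a b : R, conjLam Φ lam v (a * b) = conjLam Φ lam v a * b) ∧
    (∀ a b : R, conjRho Φ rho v (a * b) = a * conjRho Φ rho v b) ∧
    (∀ a b : R, a * conjLam Φ lam v b = conjRho Φ rho v a * b) ∧
    (∀ a : R, conjRho Φ rho v (conjLam Φ lam v a) = conjLam Φ lam v (conjRho Φ rho v a)) ∧
    (conjLam Φ lam v (conjS Φ lam rho s v) = conjRho Φ rho v (conjS Φ lam rho s v)) ∧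
    (∀ a : R, conjLam Φ lam v (conjLam Φ lam v a)
        = conjLam Φ lam v a + conjS Φ lam rho s v * a) ∧
    (∀ a : R, conjRho Φ rho v (conjRho Φ rho v a)
        = conjRho Φ rho v a + a * conjS Φ lam rho s v) ∧
    (Function.Bijective (fun a : R => Φ (a + v))) ∧
    (∀ a b c : R, Φ ((a - b + c) + v) = Φ (a + v) - Φ (b + v) + Φ (c + v)) ∧
    (∀ a b : R, Φ ((a * b + rho a + lam b + s) + v)
        = Φ (a + v) * Φ (b + v) + conjRho Φ rho v (Φ (a + v))
            + conjLam Φ lam v (Φ (b + v)) + conjS Φ lam rho s v) := by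
  have hdatum : IsHomotheticDatum_s6 lam rho s := ⟨hlam, hrho, hmid, hperm, hs, hll, hrr⟩
  -- `conjLam Φ lam v`, `conjRho Φ rho v`, `conjS Φ lam rho s v` unfold to this transported datum.
  obtain ⟨lam_mul, rho_mul, mul_lam, rho_lam, lam_s, lam_lam, rho_rho⟩ :=
    (hdatum.translate v).conj Φ
  refine ⟨map_add (Homothetic.conjEnd Φ (Homothetic.translateLam lam v)),
    map_add (Homothetic.conjEnd Φ (Homothetic.translateRho rho v)),
    lam_mul, rho_mul, mul_lam, rho_lam, lam_s, lam_lam, rho_rho,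
    Φ.bijective.comp (Equiv.addRight v).bijective, fun a b c => ?_, fun a b => ?_⟩
  · rw [show a - b + c + v = (a + v) - (b + v) + (c + v) by abel, map_add, map_sub]
  · exact (congrArg Φ (Homothetic.trussMul_add lam rho s v a b)).trans
      (Homothetic.map_trussMul ..)
end

section
/- Let (λ, ρ, s) and (λ', ρ', s') be homothetic data on a ring R, and define a ⋄ b = a·b + ρ(a) + λ(b) + s and a ⋄' b = a·b + ρ'(a) + λ'(b) + s'. Suppose Ψ : R → R is a bijection satisfying Ψ(a − b + c) = Ψ(a) − Ψ(b) + Ψ(c) and Ψ(a ⋄ b) = Ψ(a) ⋄' Ψ(b) for all a, b, c ∈ R. Then Φ : a ↦ Ψ(a) − Ψ(0) is a ring automorphism of R, and with v = −Ψ⁻¹(0) one has s' = Φ(s + v + v² − ρ(v) − λ(v)), λ'(a) = Φ(λ(Φ⁻¹(a)) − v·Φ⁻¹(a)) and ρ'(a) = Φ(ρ(Φ⁻¹(a)) − Φ⁻¹(a)·v) for all a ∈ R. -/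
/-!
For all `λ, ρ, s` the truss product satisfies
`x ⋄ y - x ⋄ z + z ⋄ z - z ⋄ y = (x - z) * (y - z)`. A map preserving the heap bracket
`a - b + c` is affine, so `Φ = Ψ - Ψ 0` is additive, and applying `Ψ` to the identity with
`z = 0` shows that `Φ` is multiplicative. Writing `Ψ a = Φ (a + v)`, the compatibility with
the truss products becomes `Φ ((x - v) ⋄ (y - v) + v) = Φ x ⋄' Φ y`; evaluating it at
`x = 0` or `y = 0` reads off `s'`, `λ'` and `ρ'`.
-/

section Heap

variable {G H : Type*} [AddGroup G] [AddCommGroup H]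

def AddMonoidHom.ofHeapHom (f : G → H) (hf : ∀ a b c, f (a - b + c) = f a - f b + f c) :
    G →+ H :=
  AddMonoidHom.mk' (fun a => f a - f 0) fun a b => by
    have h := hf a 0 b
    rw [sub_zero] at h
    rw [h]
    abel

variable (f : G → H) (hf : ∀ a b c, f (a - b + c) = f a - f b + f c)

@[simp]
theorem AddMonoidHom.ofHeapHom_apply (a : G) : ofHeapHom f hf a = f a - f 0 := rfl

theorem AddMonoidHom.ofHeapHom_sub {u : G} (hu : f u = 0) (a : G) :
    ofHeapHom f hf (a - u) = f a := by
  rw [map_sub, ofHeapHom_apply, ofHeapHom_apply, hu]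
  abel

end Heap

section HomotheticTruss

variable {R S : Type*} [NonUnitalRing R] [NonUnitalRing S]

def homotheticTrussMul (lam rho : R →+ R) (s a b : R) : R := a * b + rho a + lam b + s

theorem sub_mul_sub_eq_homotheticTrussMul (lam rho : R →+ R) (s x y z : R) :
    (x - z) * (y - z) = homotheticTrussMul lam rho s x y - homotheticTrussMul lam rho s x z
      + homotheticTrussMul lam rho s z z - homotheticTrussMul lam rho s z y := by
  unfold homotheticTrussMul
  noncomm_ring

variable (lam rho : R →+ R) (s : R) (lam' rho' : S →+ S) (s' : S)

def NonUnitalRingHom.ofHomotheticTrussHom (f : R → S)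
    (hheap : ∀ a b c, f (a - b + c) = f a - f b + f c)
    (hmul : ∀ a b, f (homotheticTrussMul lam rho s a b)
      = homotheticTrussMul lam' rho' s' (f a) (f b)) : R →ₙ+* S :=
  { AddMonoidHom.ofHeapHom f hheap with
    map_mul' := fun a b => by
      let φ := AddMonoidHom.ofHeapHom f hheap
      let μ := homotheticTrussMul lam rho s
      let μ' := homotheticTrussMul lam' rho' s'
      change φ (a * b) = φ a * φ b
      calc φ (a * b) = φ (μ a b - μ a 0 + μ 0 0 - μ 0 b) := by
            rw [← sub_mul_sub_eq_homotheticTrussMul, sub_zero, sub_zero]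
        _ = f (μ a b) - f (μ a 0) + f (μ 0 0) - f (μ 0 b) := by
            simp only [map_sub, map_add, AddMonoidHom.ofHeapHom_apply, φ]
            abel
        _ = μ' (f a) (f b) - μ' (f a) (f 0) + μ' (f 0) (f 0) - μ' (f 0) (f b) := by
            simp only [μ, μ', hmul]
        _ = φ a * φ b := (sub_mul_sub_eq_homotheticTrussMul lam' rho' s' _ _ _).symm }

theorem homotheticTrussData_eq_of_map_shift (Φ : R ≃+* S) (v : R)
    (h : ∀ x y, Φ (homotheticTrussMul lam rho s (x - v) (y - v) + v)
      = homotheticTrussMul lam' rho' s' (Φ x) (Φ y)) :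
    s' = Φ (s + v + v * v - rho v - lam v) ∧
      (∀ a, lam' a = Φ (lam (Φ.symm a) - v * Φ.symm a)) ∧
      (∀ a, rho' a = Φ (rho (Φ.symm a) - Φ.symm a * v)) := by
  have hs' : s' = Φ (s + v + v * v - rho v - lam v) := by
    have h00 := h 0 0
    simp only [homotheticTrussMul, map_zero, mul_zero, add_zero, zero_add] at h00
    rw [← h00]
    congr 1
    simp only [zero_sub, map_neg]
    noncomm_ring
  refine ⟨hs', fun a => ?_, fun a => ?_⟩
  · have h0a := h 0 (Φ.symm a)
    simp only [homotheticTrussMul, RingEquiv.apply_symm_apply, map_zero, zero_mul,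
      zero_add] at h0a
    rw [eq_sub_of_add_eq h0a.symm, hs', ← map_sub]
    congr 1
    simp only [zero_sub, map_neg, map_sub]
    noncomm_ring
  · have ha0 := h (Φ.symm a) 0
    simp only [homotheticTrussMul, RingEquiv.apply_symm_apply, map_zero, mul_zero,
      add_zero, zero_add] at ha0
    rw [eq_sub_of_add_eq ha0.symm, hs', ← map_sub]
    congr 1
    simp only [zero_sub, map_neg, map_sub]
    noncomm_ring

end HomotheticTruss

theorem homothetic_truss_iso_gives_transform_general {R : Type*} [NonUnitalRing R]
    (lam rho lam' rho' : R →+ R) (s s' : R)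
    (Ψ : R → R) (hbij : Function.Bijective Ψ)
    (hheap : ∀ a b c : R, Ψ (a - b + c) = Ψ a - Ψ b + Ψ c)
    (hmul : ∀ a b : R, Ψ (a * b + rho a + lam b + s)
        = Ψ a * Ψ b + rho' (Ψ a) + lam' (Ψ b) + s') :
    ∃ (Φ : R ≃+* R) (v : R),
      (∀ a : R, Φ a = Ψ a - Ψ 0) ∧
      Ψ (-v) = 0 ∧
      s' = Φ (s + v + v * v - rho v - lam v) ∧
      (∀ a : R, lam' a = Φ (lam (Φ.symm a) - v * Φ.symm a)) ∧
      (∀ a : R, rho' a = Φ (rho (Φ.symm a) - Φ.symm a * v)) := by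
  let φ := NonUnitalRingHom.ofHomotheticTrussHom lam rho s lam' rho' s' Ψ hheap hmul
  let Φ := RingEquiv.ofBijective φ ((Equiv.subRight (Ψ 0)).bijective.comp hbij)
  obtain ⟨u, hu⟩ := hbij.surjective 0
  have hΨ : ∀ a, Ψ a = Φ (a - u) := fun a =>
    (AddMonoidHom.ofHeapHom_sub Ψ hheap hu a).symm
  refine ⟨Φ, -u, fun _ => rfl, by rwa [neg_neg], ?_⟩
  refine homotheticTrussData_eq_of_map_shift lam rho s lam' rho' s' Φ (-u) fun x y => ?_
  calc Φ (homotheticTrussMul lam rho s (x - -u) (y - -u) + -u)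
      = Ψ (homotheticTrussMul lam rho s (x - -u) (y - -u)) := by rw [hΨ, sub_eq_add_neg _ u]
    _ = homotheticTrussMul lam' rho' s' (Ψ (x - -u)) (Ψ (y - -u)) := hmul _ _
    _ = homotheticTrussMul lam' rho' s' (Φ x) (Φ y) := by
      rw [hΨ, hΨ, sub_neg_eq_add, sub_neg_eq_add, add_sub_cancel_right, add_sub_cancel_right]

/-- If `Ψ` is an isomorphism of the homothetic trusses `T(σ,s)` and `T(σ',s')`
(a bijection preserving the heap bracket and intertwining the truss products),
then `Φ : a ↦ Ψ(a) − Ψ(0)` is a ring automorphism of `R` and, with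
`v = −Ψ⁻¹(0)`, the data `(λ', ρ', s')` arise from `(λ, ρ, s)` by the standard
transformation. -/
theorem homothetic_truss_iso_gives_transform {R : Type*} [NonUnitalRing R]
    (lam rho lam' rho' : R →+ R) (s s' : R)
    (hlam : ∀ a b : R, lam (a * b) = lam a * b)
    (hrho : ∀ a b : R, rho (a * b) = a * rho b)
    (hmid : ∀ a b : R, a * lam b = rho a * b)
    (hperm : ∀ a : R, rho (lam a) = lam (rho a))
    (hs : lam s = rho s)
    (hll : ∀ a : R, lam (lam a) = lam a + s * a)
    (hrr : ∀ a : R, rho (rho a) = rho a + a * s)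
    (hlam' : ∀ a b : R, lam' (a * b) = lam' a * b)
    (hrho' : ∀ a b : R, rho' (a * b) = a * rho' b)
    (hmid' : ∀ a b : R, a * lam' b = rho' a * b)
    (hperm' : ∀ a : R, rho' (lam' a) = lam' (rho' a))
    (hs' : lam' s' = rho' s')
    (hll' : ∀ a : R, lam' (lam' a) = lam' a + s' * a)
    (hrr' : ∀ a : R, rho' (rho' a) = rho' a + a * s')
    (Ψ : R → R) (hbij : Function.Bijective Ψ)
    (hheap : ∀ a b c : R, Ψ (a - b + c) = Ψ a - Ψ b + Ψ c)
    (hmul : ∀ a b : R, Ψ (a * b + rho a + lam b + s)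
        = Ψ a * Ψ b + rho' (Ψ a) + lam' (Ψ b) + s') :
    ∃ (Φ : R ≃+* R) (v : R),
      (∀ a : R, Φ a = Ψ a - Ψ 0) ∧
      Ψ (-v) = 0 ∧
      s' = Φ (s + v + v * v - rho v - lam v) ∧
      (∀ a : R, lam' a = Φ (lam (Φ.symm a) - v * Φ.symm a)) ∧
      (∀ a : R, rho' a = Φ (rho (Φ.symm a) - Φ.symm a * v)) :=
  homothetic_truss_iso_gives_transform_general lam rho lam' rho' s s' Ψ hbij hheap hmul
end

section
/- Let (λ, ρ, s) be a homothetic datum on a ring R, let Φ be a ring automorphism of R and v ∈ R, and set s' = Φ(s + v + v² − ρ(v) − λ(v)), λ'(a) = Φ(λ(Φ⁻¹(a)) − v·Φ⁻¹(a)), ρ'(a) = Φ(ρ(Φ⁻¹(a)) − Φ⁻¹(a)·v). Then the map Θ : R × ℤ → R × ℤ, (a, k) ↦ (Φ(a) + k•Φ(v), k), is a ring isomorphism from the homothetic extension R(σ,s) to the homothetic extension R(σ',s'). -/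
namespace HomotheticExtension

variable {R : Type*} [NonUnitalRing R]

def shear (v : R) : R × ℤ ≃+ R × ℤ where
  toFun p := (p.1 + p.2 • v, p.2)
  invFun p := (p.1 - p.2 • v, p.2)
  left_inv p := by simp
  right_inv p := by simp
  map_add' p q := by
    simp only [Prod.fst_add, Prod.snd_add, add_smul, Prod.mk_add_mk]
    abel_nf

@[simp]
theorem shear_apply (v : R) (p : R × ℤ) : shear v p = (p.1 + p.2 • v, p.2) := rfl

def transport (Φ : R ≃+* R) (f : R →+ R) : R →+ R :=
  (Φ.toAddEquiv.toAddMonoidHom.comp f).comp Φ.symm.toAddEquiv.toAddMonoidHom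

@[simp]
theorem transport_apply (Φ : R ≃+* R) (f : R →+ R) (a : R) :
    transport Φ f a = Φ (f (Φ.symm a)) := rfl

theorem shear_homotheticMul (lam rho : R →+ R) (s v : R) (x y : R × ℤ) :
    shear v (homotheticMul lam rho s x y) =
      homotheticMul (lam - AddMonoidHom.mulLeft v) (rho - AddMonoidHom.mulRight v)
        (s + v + v * v - rho v - lam v) (shear v x) (shear v y) := by
  obtain ⟨a, k⟩ := x
  obtain ⟨b, l⟩ := y
  refine Prod.ext ?_ rfl
  simp only [homotheticMul, shear_apply, AddMonoidHom.sub_apply, AddMonoidHom.coe_mulLeft,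
    AddMonoidHom.coe_mulRight, map_add, map_zsmul, smul_add, smul_sub, mul_add, add_mul,
    smul_mul_assoc, mul_smul_comm, smul_smul]
  module

theorem map_homotheticMul (Φ : R ≃+* R) (lam rho : R →+ R) (s : R) (x y : R × ℤ) :
    Prod.map Φ id (homotheticMul lam rho s x y) =
      homotheticMul (transport Φ lam) (transport Φ rho) (Φ s) (Prod.map Φ id x)
        (Prod.map Φ id y) := by
  simp [homotheticMul, map_zsmul]

def homotheticIso (Φ : R ≃+* R) (v : R) : R × ℤ ≃+ R × ℤ :=
  (shear v).trans (Φ.toAddEquiv.prodCongr (.refl ℤ))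

theorem homotheticIso_apply (Φ : R ≃+* R) (v : R) (p : R × ℤ) :
    homotheticIso Φ v p = (Φ p.1 + p.2 • Φ v, p.2) := by
  simp [homotheticIso, AddEquiv.prodCongr, map_zsmul]

theorem homotheticIso_homotheticMul (Φ : R ≃+* R) (lam rho : R →+ R) (s v : R)
    (x y : R × ℤ) :
    homotheticIso Φ v (homotheticMul lam rho s x y) =
      homotheticMul (transport Φ (lam - AddMonoidHom.mulLeft v))
        (transport Φ (rho - AddMonoidHom.mulRight v)) (Φ (s + v + v * v - rho v - lam v))
        (homotheticIso Φ v x) (homotheticIso Φ v y) :=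
  (congrArg (Prod.map Φ id) (shear_homotheticMul lam rho s v x y)).trans
    (map_homotheticMul Φ _ _ _ _ _)

end HomotheticExtension

open HomotheticExtension in
theorem homothetic_extensions_equivalent_general {R : Type*} [NonUnitalRing R]
    (lam rho : R →+ R) (s : R)
    (Φ : R ≃+* R) (v : R)
    (lam' rho' : R →+ R) (s' : R)
    (hl' : ∀ a : R, lam' a = conjLam Φ lam v a)
    (hr' : ∀ a : R, rho' a = conjRho Φ rho v a)
    (hs'def : s' = conjS Φ lam rho s v) :
    (Function.Bijective (fun p : R × ℤ => ((Φ p.1 + p.2 • Φ v, p.2) : R × ℤ))) ∧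
    (∀ x y : R × ℤ,
      ((Φ (x + y).1 + (x + y).2 • Φ v, (x + y).2) : R × ℤ)
        = (Φ x.1 + x.2 • Φ v, x.2) + (Φ y.1 + y.2 • Φ v, y.2)) ∧
    (∀ x y : R × ℤ,
      ((Φ (homotheticMul lam rho s x y).1
          + (homotheticMul lam rho s x y).2 • Φ v,
          (homotheticMul lam rho s x y).2) : R × ℤ)
        = homotheticMul lam' rho' s'
            (Φ x.1 + x.2 • Φ v, x.2) (Φ y.1 + y.2 • Φ v, y.2)) := by
  have hlam' : lam' = transport Φ (lam - AddMonoidHom.mulLeft v) := by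
    ext a; simp [hl', conjLam]
  have hrho' : rho' = transport Φ (rho - AddMonoidHom.mulRight v) := by
    ext a; simp [hr', conjRho]
  simp only [← homotheticIso_apply, hlam', hrho', hs'def, conjS]
  exact ⟨(homotheticIso Φ v).bijective, (homotheticIso Φ v).map_add,
    homotheticIso_homotheticMul Φ lam rho s v⟩

/-- Given a homothetic datum `(λ, ρ, s)` on `R`, a ring automorphism `Φ` of `R`
and `v ∈ R`, with `(λ', ρ', s')` the transformed homothetic datum, the map
`Θ : (a,k) ↦ (Φ(a) + k•Φ(v), k)` is a ring isomorphism from `R(σ,s)` to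
`R(σ',s')`. -/
theorem homothetic_extensions_equivalent {R : Type*} [NonUnitalRing R]
    (lam rho : R →+ R) (s : R)
    (hlam : ∀ a b : R, lam (a * b) = lam a * b)
    (hrho : ∀ a b : R, rho (a * b) = a * rho b)
    (hmid : ∀ a b : R, a * lam b = rho a * b)
    (hperm : ∀ a : R, rho (lam a) = lam (rho a))
    (hs : lam s = rho s)
    (hll : ∀ a : R, lam (lam a) = lam a + s * a)
    (hrr : ∀ a : R, rho (rho a) = rho a + a * s)
    (Φ : R ≃+* R) (v : R)
    (lam' rho' : R →+ R) (s' : R)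
    (hl' : ∀ a : R, lam' a = conjLam Φ lam v a)
    (hr' : ∀ a : R, rho' a = conjRho Φ rho v a)
    (hs'def : s' = conjS Φ lam rho s v) :
    (Function.Bijective (fun p : R × ℤ => ((Φ p.1 + p.2 • Φ v, p.2) : R × ℤ))) ∧
    (∀ x y : R × ℤ,
      ((Φ (x + y).1 + (x + y).2 • Φ v, (x + y).2) : R × ℤ)
        = (Φ x.1 + x.2 • Φ v, x.2) + (Φ y.1 + y.2 • Φ v, y.2)) ∧
    (∀ x y : R × ℤ,
      ((Φ (homotheticMul lam rho s x y).1
          + (homotheticMul lam rho s x y).2 • Φ v,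
          (homotheticMul lam rho s x y).2) : R × ℤ)
        = homotheticMul lam' rho' s'
            (Φ x.1 + x.2 • Φ v, x.2) (Φ y.1 + y.2 • Φ v, y.2)) :=
  homothetic_extensions_equivalent_general lam rho s Φ v lam' rho' s' hl' hr' hs'def
end

section
/- Let (λ, ρ, s) be a homothetic datum on a ring R and define a ⋄ b = a·b + ρ(a) + λ(b) + s. Then ⋄ is commutative (a ⋄ b = b ⋄ a for all a, b ∈ R) if and only if R is commutative and λ = ρ. -/
theorem homothetic_truss_comm_iff_general {R : Type*} [NonUnitalRing R]
    (lam rho : R →+ R) (s : R) :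
    (∀ a b : R, a * b + rho a + lam b + s = b * a + rho b + lam a + s)
      ↔ ((∀ a b : R, a * b = b * a) ∧ ∀ a : R, lam a = rho a) := by
  constructor
  · intro h
    -- `a ⋄ 0 = ρ a + s` and `0 ⋄ a = λ a + s`
    have hlr : ∀ a : R, lam a = rho a := fun a => by simpa using (h a 0).symm
    refine ⟨fun a b => ?_, hlr⟩
    have hab := h a b
    rw [hlr a, hlr b, add_right_comm (b * a) (rho b)] at hab
    simpa only [add_left_inj] using hab
  · rintro ⟨hcomm, hlr⟩ a b
    rw [hcomm a b, hlr a, hlr b]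
    abel

/-- The homothetic truss multiplication `a ⋄ b = a·b + ρ(a) + λ(b) + s` is
commutative iff `R` is commutative and `λ = ρ`. -/
theorem homothetic_truss_comm_iff {R : Type*} [NonUnitalRing R]
    (lam rho : R →+ R) (s : R)
    (hlam : ∀ a b : R, lam (a * b) = lam a * b)
    (hrho : ∀ a b : R, rho (a * b) = a * rho b)
    (hmid : ∀ a b : R, a * lam b = rho a * b)
    (hperm : ∀ a : R, rho (lam a) = lam (rho a))
    (hs : lam s = rho s)
    (hll : ∀ a : R, lam (lam a) = lam a + s * a)
    (hrr : ∀ a : R, rho (rho a) = rho a + a * s) :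
    (∀ a b : R, a * b + rho a + lam b + s = b * a + rho b + lam a + s)
      ↔ ((∀ a b : R, a * b = b * a) ∧ ∀ a : R, lam a = rho a) :=
  homothetic_truss_comm_iff_general lam rho s
end

section
/- Let (λ, ρ, s) be a homothetic datum on a ring R and define a ⋄ b = a·b + ρ(a) + λ(b) + s. Then there exists an absorber for ⋄ (an element e ∈ R with a ⋄ e = e and e ⋄ a = e for all a ∈ R) if and only if the double homothetism is inner, i.e., there exists b ∈ R with λ(a) = b·a and ρ(a) = a·b for all a ∈ R. -/
/-!
Evaluating the absorption laws `e ⋄ a = e` and `a ⋄ e = e` at `a = 0` gives `ρ(e) + s = e` and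
`λ(e) + s = e`; subtracting these from the laws at general `a` leaves `e·a + λ(a) = 0` and
`a·e + ρ(a) = 0`, so `b = -e` makes `(λ, ρ)` inner. Conversely, for `λ = b·-` and `ρ = -·b` the
axioms `λ∘λ = λ + s·-` and `ρ∘ρ = ρ + -·s` read `b·b·a = b·a + s·a` and `a·b·b = a·b + a·s`,
and these are exactly what makes `e = s - b·b` absorbing.
-/

namespace HomotheticTruss

variable {R : Type*} [NonUnitalRing R] (lam rho : R →+ R) (s : R)

def mul (a b : R) : R := a * b + rho a + lam b + s

theorem lam_eq_neg_mul_of_left_absorber {e : R} (he : ∀ a, mul lam rho s e a = e) (a : R) :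
    lam a = -e * a := by
  have he0 : rho e + s = e := by simpa [mul] using he 0
  calc lam a = mul lam rho s e a - (rho e + s) - e * a := by unfold mul; abel
    _ = -e * a := by rw [he a, he0, sub_self, zero_sub, neg_mul]

theorem rho_eq_mul_neg_of_right_absorber {e : R} (he : ∀ a, mul lam rho s a e = e) (a : R) :
    rho a = a * -e := by
  have he0 : lam e + s = e := by simpa [mul] using he 0
  calc rho a = mul lam rho s a e - (lam e + s) - a * e := by unfold mul; abel
    _ = a * -e := by rw [he a, he0, sub_self, zero_sub, mul_neg]

variable {lam rho s}

theorem left_absorber_of_inner {b : R} (hlam : ∀ a, lam a = b * a) (hrho : ∀ a, rho a = a * b)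
    (hll : ∀ a, lam (lam a) = lam a + s * a) (a : R) :
    mul lam rho s (s - b * b) a = s - b * b := by
  have hsq : ∀ x, b * (b * x) = b * x + s * x := fun x => by simpa only [hlam] using hll x
  simp only [mul, hlam, hrho, sub_mul, mul_assoc, hsq]
  abel

theorem right_absorber_of_inner {b : R} (hlam : ∀ a, lam a = b * a) (hrho : ∀ a, rho a = a * b)
    (hrr : ∀ a, rho (rho a) = rho a + a * s) (a : R) :
    mul lam rho s a (s - b * b) = s - b * b := by
  have hsq : ∀ x, x * b * b = x * b + x * s := fun x => by simpa only [hrho] using hrr x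
  simp only [mul, hlam, hrho, mul_sub, ← mul_assoc, hsq]
  abel

end HomotheticTruss

theorem homothetic_truss_absorber_iff_inner_general {R : Type*} [NonUnitalRing R]
    (lam rho : R →+ R) (s : R)
    (hll : ∀ a : R, lam (lam a) = lam a + s * a)
    (hrr : ∀ a : R, rho (rho a) = rho a + a * s) :
    (∃ e : R, ∀ a : R,
        (a * e + rho a + lam e + s = e) ∧ (e * a + rho e + lam a + s = e))
      ↔ (∃ b : R, ∀ a : R, lam a = b * a ∧ rho a = a * b) := by
  constructor
  · rintro ⟨e, he⟩
    refine ⟨-e, fun a => ⟨?_, ?_⟩⟩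
    · exact HomotheticTruss.lam_eq_neg_mul_of_left_absorber lam rho s (fun a => (he a).2) a
    · exact HomotheticTruss.rho_eq_mul_neg_of_right_absorber lam rho s (fun a => (he a).1) a
  · rintro ⟨b, hb⟩
    have hlam a := (hb a).1
    have hrho a := (hb a).2
    exact ⟨s - b * b, fun a => ⟨HomotheticTruss.right_absorber_of_inner hlam hrho hrr a,
      HomotheticTruss.left_absorber_of_inner hlam hrho hll a⟩⟩

/-- The homothetic truss multiplication `a ⋄ b = a·b + ρ(a) + λ(b) + s` has an
absorber iff the double homothetism `(λ, ρ)` is inner. -/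
theorem homothetic_truss_absorber_iff_inner {R : Type*} [NonUnitalRing R]
    (lam rho : R →+ R) (s : R)
    (hlam : ∀ a b : R, lam (a * b) = lam a * b)
    (hrho : ∀ a b : R, rho (a * b) = a * rho b)
    (hmid : ∀ a b : R, a * lam b = rho a * b)
    (hperm : ∀ a : R, rho (lam a) = lam (rho a))
    (hs : lam s = rho s)
    (hll : ∀ a : R, lam (lam a) = lam a + s * a)
    (hrr : ∀ a : R, rho (rho a) = rho a + a * s) :
    (∃ e : R, ∀ a : R,
        (a * e + rho a + lam e + s = e) ∧ (e * a + rho e + lam a + s = e))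
      ↔ (∃ b : R, ∀ a : R, lam a = b * a ∧ rho a = a * b) :=
  homothetic_truss_absorber_iff_inner_general lam rho s hll hrr
end

section
/- Let R be a (not necessarily unital, associative) ring. Then R has a multiplicative identity if and only if there exists a bijection Ψ : R → R satisfying Ψ(a − b + c) = Ψ(a) − Ψ(b) + Ψ(c) and Ψ(a·b + a + b) = Ψ(a)·Ψ(b) for all a, b, c ∈ R (i.e., the truss T(id,0) with product a ⋄ b = a·b + a + b is isomorphic to the truss T(R) with product a·b). -/
/-!
Translation by an identity `u`, `a ↦ a + u`, preserves the heap bracket and carries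
`a ⋄ b` to the product because `(a + u) * (b + u) = a * b + a + b + u`. Conversely, `0`
is an identity for `⋄`, so any surjection carrying `⋄` to the product sends it to an
identity of `R`.
-/

theorem add_mul_add_eq_of_mul_identity {R : Type*} [NonUnitalRing R] {u : R}
    (hu : ∀ a : R, u * a = a ∧ a * u = a) (a b : R) :
    (a + u) * (b + u) = a * b + a + b + u := by
  simp only [mul_add, add_mul, (hu a).2, (hu b).1, (hu u).1]
  abel

theorem map_zero_mul_identity_of_map_circ {R S : Type*} [NonUnitalNonAssocSemiring R] [Mul S]
    {Ψ : R → S} (hΨ : ∀ a b : R, Ψ (a * b + a + b) = Ψ a * Ψ b) (a : R) :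
    Ψ 0 * Ψ a = Ψ a ∧ Ψ a * Ψ 0 = Ψ a := by
  constructor
  · simpa using (hΨ 0 a).symm
  · simpa using (hΨ a 0).symm

/-- A non-unital ring `R` has a multiplicative identity iff the truss
`T(id,0)` with product `a ⋄ b = a·b + a + b` is isomorphic to the truss `T(R)`
with the ring product, i.e. there is a bijection `Ψ : R → R` preserving the heap
bracket with `Ψ(a·b + a + b) = Ψ(a)·Ψ(b)`. -/
theorem has_identity_iff_truss_iso {R : Type*} [NonUnitalRing R] :
    (∃ u : R, ∀ a : R, u * a = a ∧ a * u = a)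
      ↔ (∃ Ψ : R → R, Function.Bijective Ψ ∧
          (∀ a b c : R, Ψ (a - b + c) = Ψ a - Ψ b + Ψ c) ∧
          (∀ a b : R, Ψ (a * b + a + b) = Ψ a * Ψ b)) := by
  constructor
  · rintro ⟨u, hu⟩
    exact ⟨(· + u), (Equiv.addRight u).bijective, fun a b c => by dsimp only; abel,
      fun a b => (add_mul_add_eq_of_mul_identity hu a b).symm⟩
  · rintro ⟨Ψ, hbij, -, hmul⟩
    refine ⟨Ψ 0, fun x => ?_⟩
    obtain ⟨a, rfl⟩ := hbij.surjective x
    exact map_zero_mul_identity_of_map_circ hmul a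
end

section
/- Let A be a ring with identity and B any ring, and let (λ, ρ) be a bimultiplication on the product ring A × B. Then there exist a bimultiplication (λ_A, ρ_A) on A and a bimultiplication (λ_B, ρ_B) on B such that λ(a, b) = (λ_A(a), λ_B(b)) and ρ(a, b) = (ρ_A(a), ρ_B(b)) for all (a, b) ∈ A × B. -/
structure IsBimultiplication {R : Type*} [NonUnitalNonAssocSemiring R] (lam rho : R →+ R) :
    Prop where
  lam_mul : ∀ x y : R, lam (x * y) = lam x * y
  rho_mul : ∀ x y : R, rho (x * y) = x * rho y
  mul_lam : ∀ x y : R, x * lam y = rho x * y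

namespace IsBimultiplication

section Restrict

variable {R S : Type*} [NonUnitalNonAssocSemiring R] [NonUnitalNonAssocSemiring S]
  {lam rho : R × S →+ R × S}

theorem fst_comp_inl (h : IsBimultiplication lam rho) :
    IsBimultiplication ((AddMonoidHom.fst R S).comp (lam.comp (AddMonoidHom.inl R S)))
      ((AddMonoidHom.fst R S).comp (rho.comp (AddMonoidHom.inl R S))) where
  lam_mul a b := by simpa using congrArg Prod.fst (h.lam_mul (a, 0) (b, 0))
  rho_mul a b := by simpa using congrArg Prod.fst (h.rho_mul (a, 0) (b, 0))
  mul_lam a b := by simpa using congrArg Prod.fst (h.mul_lam (a, 0) (b, 0))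

theorem snd_comp_inr (h : IsBimultiplication lam rho) :
    IsBimultiplication ((AddMonoidHom.snd R S).comp (lam.comp (AddMonoidHom.inr R S)))
      ((AddMonoidHom.snd R S).comp (rho.comp (AddMonoidHom.inr R S))) where
  lam_mul a b := by simpa using congrArg Prod.snd (h.lam_mul (0, a) (0, b))
  rho_mul a b := by simpa using congrArg Prod.snd (h.rho_mul (0, a) (0, b))
  mul_lam a b := by simpa using congrArg Prod.snd (h.mul_lam (0, a) (0, b))

end Restrict

section Split

variable {R S : Type*} [NonAssocSemiring R] [NonUnitalNonAssocSemiring S]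
  {lam rho : R × S →+ R × S}

-- The cross terms vanish: multiply by the idempotent `(1, 0)` on the appropriate side.

theorem snd_lam_inl (h : IsBimultiplication lam rho) (a : R) : (lam (a, 0)).2 = 0 := by
  simpa using congrArg Prod.snd (h.lam_mul (a, 0) (1, 0))

theorem fst_lam_inr (h : IsBimultiplication lam rho) (b : S) : (lam (0, b)).1 = 0 := by
  simpa using congrArg Prod.fst (h.mul_lam (1, 0) (0, b))

theorem snd_rho_inl (h : IsBimultiplication lam rho) (a : R) : (rho (a, 0)).2 = 0 := by
  simpa using congrArg Prod.snd (h.rho_mul (1, 0) (a, 0))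

theorem fst_rho_inr (h : IsBimultiplication lam rho) (b : S) : (rho (0, b)).1 = 0 := by
  simpa using (congrArg Prod.fst (h.mul_lam (0, b) (1, 0))).symm

theorem lam_apply (h : IsBimultiplication lam rho) (p : R × S) :
    lam p = ((lam (p.1, 0)).1, (lam (0, p.2)).2) := by
  conv_lhs => rw [← Prod.fst_add_snd p, map_add]
  ext
  · simp [h.fst_lam_inr]
  · simp [h.snd_lam_inl]

theorem rho_apply (h : IsBimultiplication lam rho) (p : R × S) :
    rho p = ((rho (p.1, 0)).1, (rho (0, p.2)).2) := by
  conv_lhs => rw [← Prod.fst_add_snd p, map_add]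
  ext
  · simp [h.fst_rho_inr]
  · simp [h.snd_rho_inl]

end Split

end IsBimultiplication

/-- A bimultiplication on a product ring `A × B`, with `A` unital, splits into
a bimultiplication on `A` and a bimultiplication on `B`. -/
theorem bimultiplication_prod_splits {A B : Type*} [Ring A] [NonUnitalRing B]
    (lam rho : A × B →+ A × B)
    (hlam : ∀ x y : A × B, lam (x * y) = lam x * y)
    (hrho : ∀ x y : A × B, rho (x * y) = x * rho y)
    (hmid : ∀ x y : A × B, x * lam y = rho x * y) :
    ∃ (lamA rhoA : A →+ A) (lamB rhoB : B →+ B),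
      (∀ a b : A, lamA (a * b) = lamA a * b) ∧
      (∀ a b : A, rhoA (a * b) = a * rhoA b) ∧
      (∀ a b : A, a * lamA b = rhoA a * b) ∧
      (∀ a b : B, lamB (a * b) = lamB a * b) ∧
      (∀ a b : B, rhoB (a * b) = a * rhoB b) ∧
      (∀ a b : B, a * lamB b = rhoB a * b) ∧
      (∀ p : A × B, lam p = (lamA p.1, lamB p.2)) ∧
      (∀ p : A × B, rho p = (rhoA p.1, rhoB p.2)) := by
  have h : IsBimultiplication lam rho := ⟨hlam, hrho, hmid⟩
  have hA := h.fst_comp_inl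
  have hB := h.snd_comp_inr
  exact ⟨_, _, _, _, hA.lam_mul, hA.rho_mul, hA.mul_lam, hB.lam_mul, hB.rho_mul, hB.mul_lam,
    h.lam_apply, h.rho_apply⟩
end

section
/- Let (T, [−,−,−], ·) be a truss and e ∈ T. Define a +_e b := [a, e, b] and a ∘ b := [[a·b, a·e, e], [e·b, e·e, e], e]. Then (T, +_e) is an abelian group with zero e and inverse a ↦ [e, a, e], the operation ∘ is associative, and ∘ distributes over +_e on both sides; that is, (T, +_e, ∘) is an associative ring (denoted R(T;e)). -/
/-- The retract addition `a +_e b := [a, e, b]` of a truss at `e`. -/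
def tadd {T : Type*} (br : T → T → T → T) (e a b : T) : T := br a e b

/-- The ring multiplication `a ∘ b := [[a·b, a·e, e], [e·b, e·e, e], e]` on the
retract of a truss at `e`. -/
def tcirc {T : Type*} (br : T → T → T → T) (mul : T → T → T) (e a b : T) : T :=
  br (br (mul a b) (mul a e) e) (br (mul e b) (mul e e) e) e

/-!
Fixing `e`, the heap axioms make `(T, +_e)` an abelian group with zero `e` in which
`[a, b, c] = a - b + c`. The truss distributive laws then say exactly that `·` preserves
`x - y + z` in each argument, and `∘` is the usual correction `ab - a0 - 0b + 00` that turns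
such a biaffine multiplication into a biadditive one, so the ring laws follow by expanding.
-/

section Retract

variable {T : Type*}

abbrev retractAddCommGroup (br : T → T → T → T)
    (hassoc : ∀ a b c d f : T, br a b (br c d f) = br (br a b c) d f)
    (hml : ∀ a b : T, br a a b = b) (hmr : ∀ a b : T, br a b b = a)
    (hcomm : ∀ a b c : T, br a b c = br c b a) (e : T) : AddCommGroup T :=
  letI : Add T := ⟨tadd br e⟩
  letI : Zero T := ⟨e⟩
  letI : Neg T := ⟨fun a => br e a e⟩
  { add_assoc := fun a b c => (hassoc a e b e c).symm
    zero_add := hml e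
    add_zero := fun a => hmr a e
    add_comm := fun a b => hcomm a e b
    neg_add_cancel := fun a => by
      show br (br e a e) e a = e
      rw [← hassoc, hml, hmr]
    nsmul := nsmulRec
    zsmul := zsmulRec }

theorem br_eq_sub_add [AddCommGroup T] {br : T → T → T → T}
    (hassoc : ∀ a b c d f : T, br a b (br c d f) = br (br a b c) d f)
    (hmr : ∀ a b : T, br a b b = a) (hcomm : ∀ a b c : T, br a b c = br c b a)
    (hadd : ∀ a b : T, a + b = br a 0 b) (a b c : T) :
    br a b c = a - b + c := by
  have h : br a b c + b = a + c := by
    rw [hadd, hadd, ← hassoc, hcomm c, hassoc, hmr]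
  rw [eq_sub_of_add_eq h]
  abel

section Biaffine

variable [AddCommGroup T]

structure IsBiaffine (mul : T → T → T) : Prop where
  affine_right : ∀ w x y z : T, mul w (x - y + z) = mul w x - mul w y + mul w z
  affine_left : ∀ x y z w : T, mul (x - y + z) w = mul x w - mul y w + mul z w

def retractMul (mul : T → T → T) (a b : T) : T :=
  mul a b - mul a 0 - mul 0 b + mul 0 0

namespace IsBiaffine

variable {mul : T → T → T}

theorem affine_right_sub_sub_add (h : IsBiaffine mul) (w x₁ x₂ x₃ x₄ : T) :
    mul w (x₁ - x₂ - x₃ + x₄) = mul w x₁ - mul w x₂ + mul w 0 - mul w x₃ + mul w x₄ := by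
  rw [show x₁ - x₂ - x₃ + x₄ = x₁ - x₂ + (0 - x₃ + x₄) by abel, h.affine_right,
    h.affine_right]
  abel

theorem affine_left_sub_sub_add (h : IsBiaffine mul) (x₁ x₂ x₃ x₄ w : T) :
    mul (x₁ - x₂ - x₃ + x₄) w = mul x₁ w - mul x₂ w + mul 0 w - mul x₃ w + mul x₄ w := by
  rw [show x₁ - x₂ - x₃ + x₄ = x₁ - x₂ + (0 - x₃ + x₄) by abel, h.affine_left,
    h.affine_left]
  abel

theorem retractMul_assoc (h : IsBiaffine mul)
    (hmulassoc : ∀ a b c : T, mul (mul a b) c = mul a (mul b c)) (a b c : T) :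
    retractMul mul (retractMul mul a b) c = retractMul mul a (retractMul mul b c) := by
  simp only [retractMul, h.affine_left_sub_sub_add, h.affine_right_sub_sub_add, hmulassoc]
  abel

theorem retractMul_add_right (h : IsBiaffine mul) (a b c : T) :
    retractMul mul a (b + c) = retractMul mul a b + retractMul mul a c := by
  have hbc : b + c = b - 0 + c := by rw [sub_zero]
  simp only [retractMul, hbc, h.affine_right]
  abel

theorem retractMul_add_left (h : IsBiaffine mul) (a b c : T) :
    retractMul mul (a + b) c = retractMul mul a c + retractMul mul b c := by
  have hab : a + b = a - 0 + b := by rw [sub_zero]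
  simp only [retractMul, hab, h.affine_left]
  abel

end IsBiaffine

theorem tcirc_zero_eq_retractMul {br : T → T → T → T} (mul : T → T → T)
    (hbr : ∀ a b c : T, br a b c = a - b + c) :
    tcirc br mul 0 = retractMul mul := by
  funext a b
  simp only [tcirc, retractMul, hbr]
  abel

end Biaffine

end Retract

/-- For any truss `(T, [−,−,−], ·)` and any `e ∈ T`, the retract `(T, +_e)` is an
abelian group with zero `e` and inverses `a ↦ [e,a,e]`, and the operation
`a ∘ b = [[a·b, a·e, e], [e·b, e·e, e], e]` is associative and distributes over
`+_e`: `(T, +_e, ∘)` is an associative ring `R(T;e)`. -/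
theorem truss_retract_ring {T : Type*} (br : T → T → T → T) (mul : T → T → T)
    (hassoc : ∀ a b c d f : T, br a b (br c d f) = br (br a b c) d f)
    (hml : ∀ a b : T, br a a b = b)
    (hmr : ∀ a b : T, br a b b = a)
    (hcomm : ∀ a b c : T, br a b c = br c b a)
    (hmulassoc : ∀ a b c : T, mul (mul a b) c = mul a (mul b c))
    (hdistl : ∀ a b c d : T, mul a (br b c d) = br (mul a b) (mul a c) (mul a d))
    (hdistr : ∀ a b c d : T, mul (br a b c) d = br (mul a d) (mul b d) (mul c d))
    (e : T) :
    (∀ a b c : T, tadd br e (tadd br e a b) c = tadd br e a (tadd br e b c)) ∧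
    (∀ a b : T, tadd br e a b = tadd br e b a) ∧
    (∀ a : T, tadd br e e a = a) ∧
    (∀ a : T, tadd br e a e = a) ∧
    (∀ a : T, tadd br e a (br e a e) = e) ∧
    (∀ a b c : T,
      tcirc br mul e (tcirc br mul e a b) c = tcirc br mul e a (tcirc br mul e b c)) ∧
    (∀ a b c : T,
      tcirc br mul e a (tadd br e b c)
        = tadd br e (tcirc br mul e a b) (tcirc br mul e a c)) ∧
    (∀ a b c : T,
      tcirc br mul e (tadd br e a b) c
        = tadd br e (tcirc br mul e a c) (tcirc br mul e b c)) := by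
  let _ := retractAddCommGroup br hassoc hml hmr hcomm e
  have hbr : ∀ a b c : T, br a b c = a - b + c :=
    br_eq_sub_add hassoc hmr hcomm fun _ _ => rfl
  have hmul : IsBiaffine mul :=
    ⟨fun w x y z => by rw [← hbr, hdistl, hbr], fun x y z w => by rw [← hbr, hdistr, hbr]⟩
  have htcirc : tcirc br mul e = retractMul mul := tcirc_zero_eq_retractMul mul hbr
  rw [htcirc]
  exact ⟨add_assoc, add_comm, zero_add, add_zero, add_neg_cancel,
    hmul.retractMul_assoc hmulassoc, hmul.retractMul_add_right, hmul.retractMul_add_left⟩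
end

section
/- Let (T, [−,−,−], ·) be a truss and e, f ∈ T. Then the translation map τ_e^f : T → T, a ↦ [a, e, f], is a ring isomorphism from R(T;e) to R(T;f); that is, τ_e^f is a bijection, τ_e^f(a +_e b) = τ_e^f(a) +_f τ_e^f(b), and τ_e^f(a ∘_e b) = τ_e^f(a) ∘_f τ_e^f(b) for all a, b ∈ T. -/
structure IsAbelianHeap {T : Type*} (br : T → T → T → T) : Prop where
  assoc : ∀ a b c d g : T, br a b (br c d g) = br (br a b c) d g
  cancel_left : ∀ a b : T, br a a b = b
  cancel_right : ∀ a b : T, br a b b = a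
  comm : ∀ a b c : T, br a b c = br c b a

namespace IsAbelianHeap

variable {T : Type*} {br : T → T → T → T} (h : IsAbelianHeap br)
include h

abbrev toAddCommGroup (e : T) : AddCommGroup T :=
  letI : Add T := ⟨fun a b => br a e b⟩
  letI : Zero T := ⟨e⟩
  letI : Neg T := ⟨fun a => br e a e⟩
  { nsmul := nsmulRec
    zsmul := zsmulRec
    add_assoc a b c := (h.assoc a e b e c).symm
    zero_add := h.cancel_left e
    add_zero a := h.cancel_right a e
    neg_add_cancel a := by
      change br (br e a e) e a = e
      rw [← h.assoc, h.cancel_left, h.cancel_right]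
    add_comm a b := h.comm a e b }

theorem eq_sub_add (e : T) :
    letI := h.toAddCommGroup e
    ∀ a b c : T, br a b c = a - b + c := by
  intro a b c
  change br a b c = br (br a e (br e b e)) e c
  rw [h.assoc a e e b e, h.cancel_right, ← h.assoc a b e e c, h.cancel_left]

theorem translate_bijective (e f : T) : Function.Bijective (fun a : T => br a e f) := by
  refine Function.bijective_iff_has_inverse.mpr ⟨fun a => br a f e, fun a => ?_, fun a => ?_⟩ <;>
    simp only [← h.assoc, h.cancel_left, h.cancel_right]

theorem translate_br (e f a b c : T) :
    br (br a b c) e f = br (br a e f) (br b e f) (br c e f) := by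
  let := h.toAddCommGroup e
  simp only [h.eq_sub_add e]
  abel

theorem translate_tcirc {mul : T → T → T}
    (hdistl : ∀ a b c d : T, mul a (br b c d) = br (mul a b) (mul a c) (mul a d))
    (hdistr : ∀ a b c d : T, mul (br a b c) d = br (mul a d) (mul b d) (mul c d))
    (e f a b : T) :
    br (tcirc br mul e a b) e f = tcirc br mul f (br a e f) (br b e f) := by
  let := h.toAddCommGroup e
  simp only [tcirc, hdistl, hdistr]
  simp only [h.eq_sub_add e]
  abel

end IsAbelianHeap

theorem truss_translation_ring_iso_general {T : Type*} (br : T → T → T → T)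
    (mul : T → T → T)
    (hassoc : ∀ a b c d g : T, br a b (br c d g) = br (br a b c) d g)
    (hml : ∀ a b : T, br a a b = b)
    (hmr : ∀ a b : T, br a b b = a)
    (hcomm : ∀ a b c : T, br a b c = br c b a)
    (hdistl : ∀ a b c d : T, mul a (br b c d) = br (mul a b) (mul a c) (mul a d))
    (hdistr : ∀ a b c d : T, mul (br a b c) d = br (mul a d) (mul b d) (mul c d))
    (e f : T) :
    (Function.Bijective (fun a : T => br a e f)) ∧
    (∀ a b : T, br (tadd br e a b) e f = tadd br f (br a e f) (br b e f)) ∧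
    (∀ a b : T,
      br (tcirc br mul e a b) e f = tcirc br mul f (br a e f) (br b e f)) := by
  have h : IsAbelianHeap br := ⟨hassoc, hml, hmr, hcomm⟩
  refine ⟨h.translate_bijective e f, fun a b => ?_, h.translate_tcirc hdistl hdistr e f⟩
  rw [tadd, h.translate_br, hml, tadd]

/-- For any truss `(T, [−,−,−], ·)` and `e, f ∈ T`, the translation
`τ_e^f : a ↦ [a, e, f]` is a ring isomorphism `R(T;e) → R(T;f)`. -/
theorem truss_translation_ring_iso {T : Type*} (br : T → T → T → T)
    (mul : T → T → T)
    (hassoc : ∀ a b c d g : T, br a b (br c d g) = br (br a b c) d g)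
    (hml : ∀ a b : T, br a a b = b)
    (hmr : ∀ a b : T, br a b b = a)
    (hcomm : ∀ a b c : T, br a b c = br c b a)
    (hmulassoc : ∀ a b c : T, mul (mul a b) c = mul a (mul b c))
    (hdistl : ∀ a b c d : T, mul a (br b c d) = br (mul a b) (mul a c) (mul a d))
    (hdistr : ∀ a b c d : T, mul (br a b c) d = br (mul a d) (mul b d) (mul c d))
    (e f : T) :
    (Function.Bijective (fun a : T => br a e f)) ∧
    (∀ a b : T, br (tadd br e a b) e f = tadd br f (br a e f) (br b e f)) ∧
    (∀ a b : T,
      br (tcirc br mul e a b) e f = tcirc br mul f (br a e f) (br b e f)) :=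
  truss_translation_ring_iso_general br mul hassoc hml hmr hcomm hdistl hdistr e f
end

section
/- Let (T, [−,−,−], ·) be a truss and e ∈ T, and let R(T;e) be the associated ring with addition a +_e b = [a,e,b] and multiplication a ∘ b = [[a·b, a·e, e], [e·b, e·e, e], e]. Define ε by λ(a) := [e·a, e·e, e] and ρ(a) := [a·e, e·e, e]. Then (λ, ρ, e·e) is a homothetic datum on the ring R(T;e); moreover, the original truss multiplication is recovered from this datum: a·b = ((a ∘ b) +_e ρ(a)) +_e λ(b) +_e (e·e) for all a, b ∈ T. -/
/-- The left operator `λ(a) := [e·a, e·e, e]` of the canonical homothetic datum. -/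
def tlam {T : Type*} (br : T → T → T → T) (mul : T → T → T) (e a : T) : T :=
  br (mul e a) (mul e e) e

/-- The right operator `ρ(a) := [a·e, e·e, e]` of the canonical homothetic datum. -/
def trho {T : Type*} (br : T → T → T → T) (mul : T → T → T) (e a : T) : T :=
  br (mul a e) (mul e e) e

/-! Fixing `e` turns the heap `(T, [-,-,-])` into an abelian group with zero `e` in which
`[a, b, c] = a - b + c`. The distributive laws then say that multiplication is affine in
each argument, so `λ`, `ρ` and `∘` are the linear parts of `e · -`, `- · e` and the bilinear part
of `·`, and every identity of the homothetic datum becomes an identity in an abelian group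
after expanding products with these affine laws and associativity. -/

theorem exists_addCommGroup_br_eq_sub_add {T : Type*} (br : T → T → T → T)
    (hassoc : ∀ a b c d g : T, br a b (br c d g) = br (br a b c) d g)
    (hml : ∀ a b : T, br a a b = b) (hmr : ∀ a b : T, br a b b = a)
    (hcomm : ∀ a b c : T, br a b c = br c b a) (e : T) :
    ∃ _ : AddCommGroup T, (0 : T) = e ∧ br = fun a b c => a - b + c := by
  let : Add T := ⟨fun a b => br a e b⟩
  let : Zero T := ⟨e⟩
  let : Neg T := ⟨fun a => br e a e⟩
  let : AddCommGroup T :=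
    { add_assoc := fun a b c => (hassoc a e b e c).symm
      zero_add := fun a => hml e a
      add_zero := fun a => hmr a e
      nsmul := nsmulRec
      zsmul := zsmulRec
      neg_add_cancel := fun a => by
        change br (br e a e) e a = e
        rw [← hassoc, hml, hmr]
      add_comm := fun a b => hcomm a e b }
  refine ⟨inferInstance, rfl, ?_⟩
  funext a b c
  change br a b c = br (br a e (br e b e)) e c
  rw [hassoc, hmr, ← hassoc, hml]

section AffineMaps

variable {G H : Type*} [AddGroup G] [AddGroup H] {f : G → H}

theorem map_add_of_map_sub_add (hf : ∀ a b c, f (a - b + c) = f a - f b + f c) (a b : G) :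
    f (a + b) = f a - f 0 + f b := by
  simpa using hf a 0 b

theorem map_neg_of_map_sub_add (hf : ∀ a b c, f (a - b + c) = f a - f b + f c) (a : G) :
    f (-a) = f 0 - f a + f 0 := by
  simpa using hf 0 a 0

end AffineMaps

/-- For any truss `T` and `e ∈ T`, the pair `(λ, ρ)` with `λ(a) = [e·a, e·e, e]`,
`ρ(a) = [a·e, e·e, e]`, together with `s = e·e`, is a homothetic datum on the
ring `R(T;e)` (with addition `+_e` and multiplication `∘`), and the original
truss multiplication is recovered as `a·b = ((a ∘ b) +_e ρ(a)) +_e λ(b) +_e e·e`. -/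
theorem truss_canonical_homothetic_datum {T : Type*} (br : T → T → T → T)
    (mul : T → T → T)
    (hassoc : ∀ a b c d g : T, br a b (br c d g) = br (br a b c) d g)
    (hml : ∀ a b : T, br a a b = b)
    (hmr : ∀ a b : T, br a b b = a)
    (hcomm : ∀ a b c : T, br a b c = br c b a)
    (hmulassoc : ∀ a b c : T, mul (mul a b) c = mul a (mul b c))
    (hdistl : ∀ a b c d : T, mul a (br b c d) = br (mul a b) (mul a c) (mul a d))
    (hdistr : ∀ a b c d : T, mul (br a b c) d = br (mul a d) (mul b d) (mul c d))
    (e : T) :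
    (∀ a b : T, tlam br mul e (tadd br e a b)
        = tadd br e (tlam br mul e a) (tlam br mul e b)) ∧
    (∀ a b : T, trho br mul e (tadd br e a b)
        = tadd br e (trho br mul e a) (trho br mul e b)) ∧
    (∀ a b : T, tlam br mul e (tcirc br mul e a b)
        = tcirc br mul e (tlam br mul e a) b) ∧
    (∀ a b : T, trho br mul e (tcirc br mul e a b)
        = tcirc br mul e a (trho br mul e b)) ∧
    (∀ a b : T, tcirc br mul e a (tlam br mul e b)
        = tcirc br mul e (trho br mul e a) b) ∧
    (∀ a : T, trho br mul e (tlam br mul e a) = tlam br mul e (trho br mul e a)) ∧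
    (tlam br mul e (mul e e) = trho br mul e (mul e e)) ∧
    (∀ a : T, tlam br mul e (tlam br mul e a)
        = tadd br e (tlam br mul e a) (tcirc br mul e (mul e e) a)) ∧
    (∀ a : T, trho br mul e (trho br mul e a)
        = tadd br e (trho br mul e a) (tcirc br mul e a (mul e e))) ∧
    (∀ a b : T, mul a b
        = tadd br e (tadd br e (tadd br e (tcirc br mul e a b) (trho br mul e a))
            (tlam br mul e b)) (mul e e)) := by
  obtain ⟨_, rfl, rfl⟩ := exists_addCommGroup_br_eq_sub_add br hassoc hml hmr hcomm e
  have mul_add_right (a : T) := map_add_of_map_sub_add (hdistl a)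
  have mul_neg_right (a : T) := map_neg_of_map_sub_add (hdistl a)
  have mul_add_left (c : T) := map_add_of_map_sub_add (f := (mul · c)) (hdistr · · · c)
  have mul_neg_left (c : T) := map_neg_of_map_sub_add (f := (mul · c)) (hdistr · · · c)
  refine ⟨?_, ?_, ?_, ?_, ?_, ?_, ?_, ?_, ?_, ?_⟩ <;> intros <;>
    simp only [tadd, tcirc, tlam, trho, sub_eq_add_neg, mul_add_right, mul_neg_right,
      mul_add_left, mul_neg_left, hmulassoc] <;>
    abel
end
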